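/- arXiv:1703.02348 — 2 statements merged into one kernel-verified Lean document; each statement's English description precedes it below -/
import Mathlib

section
/- Let D ⊆ ℝⁿ be a bounded convex domain, V ∈ C²(D;ℝ), x* ∈ D, m₁ ≥ 1, and suppose γ₁‖x-x*‖^{2m₁} ≤ V(x) ≤ γ₂‖x-x*‖^{2m₁}, κ₁V(x)^{2-1/m₁} ≤ ‖∇V(x)‖² ≤ κ₂V(x)^{2-1/m₁}, and ‖∂²V(x)/∂x²‖ ≤ μ·V(x)^{1-1/m₁} for all x ∈ D. Then the function v(θ) = V(x⁰ + θy)^{1/m₁} is C¹ on [0,1] for any x⁰ ∈ D, y ∈ ℝⁿ with x⁰ + θy ∈ D for all θ ∈ [0,1], and its derivative w = v' is Lipschitz with constant L̄ = ((m₁-1)κ₂ + μm₁)/m₁² · ‖y‖². -/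
/-!
Write `g θ = V (x⁰ + θ • y)` and `p = 1 / m₁`. The gradient and Hessian bounds become
`g' ^ 2 ≤ κ₂ ‖y‖² g ^ (2 - p)` and `|g''| ≤ μ ‖y‖² g ^ (1 - p)`. Where `g > 0`, the derivative
`w = p g ^ (p - 1) g'` of `g ^ p` has derivative `p ((p - 1) g ^ (p - 2) g'² + g ^ (p - 1) g'')`,
in which all powers of `g` cancel against the bounds, leaving `|w'| ≤ p ((1 - p) κ₂ + μ) ‖y‖² = L̄`.
A zero of `g` is a minimum, so `g' = 0` there; the same computation with `p / 2` shows that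
`g ^ (p / 2)` is Lipschitz near it, hence `g ^ p = O((θ - θ₀)²)` has derivative `0`, and
`w² ≤ p² κ₂ ‖y‖² g ^ p` makes `w` continuous. Finally, a continuous function whose derivative is
bounded by `L̄` wherever the function does not vanish is `L̄`-Lipschitz.
-/

open Set Real Filter Topology

theorem abs_sub_le_of_hasDerivAt_Ioo {f f' : ℝ → ℝ} {a b L : ℝ} (hab : a ≤ b)
    (hf : ContinuousOn f (Icc a b)) (hf' : ∀ x ∈ Ioo a b, HasDerivAt f (f' x) x)
    (hL : ∀ x ∈ Ioo a b, |f' x| ≤ L) : |f b - f a| ≤ L * (b - a) := by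
  rcases hab.eq_or_lt with rfl | hab
  · simp
  obtain ⟨c, hc, hslope⟩ := exists_hasDerivAt_eq_slope f f' hab hf hf'
  rw [eq_div_iff (sub_pos.2 hab).ne'] at hslope
  rw [← hslope, abs_mul, abs_of_pos (sub_pos.2 hab)]
  exact mul_le_mul_of_nonneg_right (hL c hc) (sub_pos.2 hab).le

/-- Away from the zeros of `f` use the mean value theorem; between the first and the last zero
in `[s, t]` nothing needs to be estimated, since `f` vanishes at both. -/
theorem abs_sub_le_of_hasDerivAt_of_ne_zero_of_le {f f' : ℝ → ℝ} {s t L : ℝ} (hst : s ≤ t)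
    (hL : 0 ≤ L) (hf : ContinuousOn f (Icc s t))
    (hf' : ∀ x ∈ Icc s t, f x ≠ 0 → HasDerivAt f (f' x) x)
    (hbound : ∀ x ∈ Icc s t, f x ≠ 0 → |f' x| ≤ L) : |f t - f s| ≤ L * (t - s) := by
  set K := Icc s t ∩ f ⁻¹' {0}
  have hK : IsCompact K :=
    isCompact_Icc.of_isClosed_subset (hf.preimage_isClosed_of_isClosed isClosed_Icc
      isClosed_singleton) inter_subset_left
  have mvt : ∀ a b, s ≤ a → a ≤ b → b ≤ t → (∀ x ∈ Ioo a b, f x ≠ 0) →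
      |f b - f a| ≤ L * (b - a) := fun a b hsa hab hbt hne =>
    abs_sub_le_of_hasDerivAt_Ioo hab (hf.mono (Icc_subset_Icc hsa hbt))
      (fun x hx => hf' x ⟨hsa.trans hx.1.le, hx.2.le.trans hbt⟩ (hne x hx))
      (fun x hx => hbound x ⟨hsa.trans hx.1.le, hx.2.le.trans hbt⟩ (hne x hx))
  rcases K.eq_empty_or_nonempty with hK0 | hKne
  · exact mvt s t le_rfl hst le_rfl fun x hx h0 =>
      hK0.subset ⟨Ioo_subset_Icc_self hx, h0⟩
  obtain ⟨⟨hs₁, hz₁t⟩, hz₁⟩ := hK.sInf_mem hKne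
  obtain ⟨⟨hsz₂, ht₂⟩, hz₂⟩ := hK.sSup_mem hKne
  have hz₁₂ : sInf K ≤ sSup K := csInf_le_csSup hKne hK.bddBelow hK.bddAbove
  have h₁ := mvt s (sInf K) le_rfl hs₁ hz₁t fun x hx h0 =>
    (csInf_le hK.bddBelow ⟨⟨hx.1.le, hx.2.le.trans hz₁t⟩, h0⟩).not_gt hx.2
  have h₂ := mvt (sSup K) t hsz₂ ht₂ le_rfl fun x hx h0 =>
    (le_csSup hK.bddAbove ⟨⟨hsz₂.trans hx.1.le, hx.2.le⟩, h0⟩).not_gt hx.1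
  rw [mem_preimage, mem_singleton_iff] at hz₁ hz₂
  rw [hz₁, zero_sub, abs_neg] at h₁
  rw [hz₂, sub_zero] at h₂
  calc |f t - f s| ≤ |f t| + |f s| := abs_sub _ _
    _ ≤ L * (t - sSup K) + L * (sInf K - s) := add_le_add h₂ h₁
    _ ≤ L * (t - s) := by nlinarith

theorem abs_sub_le_of_hasDerivAt_of_ne_zero {f f' : ℝ → ℝ} {a b L : ℝ} (hL : 0 ≤ L)
    (hf : ContinuousOn f (Icc a b)) (hf' : ∀ x ∈ Icc a b, f x ≠ 0 → HasDerivAt f (f' x) x)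
    (hbound : ∀ x ∈ Icc a b, f x ≠ 0 → |f' x| ≤ L) :
    ∀ s ∈ Icc a b, ∀ t ∈ Icc a b, |f s - f t| ≤ L * |s - t| := by
  have key : ∀ s ∈ Icc a b, ∀ t ∈ Icc a b, s ≤ t → |f s - f t| ≤ L * |s - t| := by
    intro s hs t ht hst
    have hsub : Icc s t ⊆ Icc a b := Icc_subset_Icc hs.1 ht.2
    rw [abs_sub_comm, abs_sub_comm s, abs_of_nonneg (sub_nonneg.2 hst)]
    exact abs_sub_le_of_hasDerivAt_of_ne_zero_of_le hst hL (hf.mono hsub)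
      (fun x hx => hf' x (hsub hx)) (fun x hx => hbound x (hsub hx))
  intro s hs t ht
  rcases le_total s t with hst | hts
  · exact key s hs t ht hst
  · rw [abs_sub_comm, abs_sub_comm s]
    exact key t ht s hs hts

theorem sq_mul_rpow_sub_one_mul_le {p q A x d : ℝ} (hx : 0 < x) (hd : d ^ 2 ≤ A * x ^ (2 - p)) :
    (q * x ^ (q - 1) * d) ^ 2 ≤ q ^ 2 * A * x ^ (2 * q - p) := by
  have hpow : (x ^ (q - 1)) ^ 2 * x ^ (2 - p) = x ^ (2 * q - p) := by
    rw [← rpow_natCast, ← rpow_mul hx.le, ← rpow_add hx]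
    ring_nf
  calc (q * x ^ (q - 1) * d) ^ 2 = q ^ 2 * (x ^ (q - 1)) ^ 2 * d ^ 2 := by ring
    _ ≤ q ^ 2 * (x ^ (q - 1)) ^ 2 * (A * x ^ (2 - p)) := by gcongr
    _ = q ^ 2 * A * x ^ (2 * q - p) := by rw [← hpow]; ring

theorem abs_rpow_second_deriv_le {p A B x d e : ℝ} (hp : 0 < p) (hp1 : p ≤ 1) (hx : 0 < x)
    (hd : d ^ 2 ≤ A * x ^ (2 - p)) (he : |e| ≤ B * x ^ (1 - p)) :
    |p * (d * (p - 1) * x ^ (p - 1 - 1)) * d + p * x ^ (p - 1) * e| ≤ p * ((1 - p) * A + B) := by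
  have h₁ : x ^ (p - 1 - 1) * x ^ (2 - p) = 1 := by
    rw [← rpow_add hx]; ring_nf; exact rpow_zero x
  have h₂ : x ^ (p - 1) * x ^ (1 - p) = 1 := by
    rw [← rpow_add hx]; ring_nf; exact rpow_zero x
  have hx₁ := rpow_pos_of_pos hx (p - 1 - 1)
  have hx₂ := rpow_pos_of_pos hx (p - 1)
  calc |p * (d * (p - 1) * x ^ (p - 1 - 1)) * d + p * x ^ (p - 1) * e|
      = p * |(1 - p) * x ^ (p - 1 - 1) * d ^ 2 - x ^ (p - 1) * e| := by
        rw [← abs_of_pos hp, ← abs_mul, abs_of_pos hp, ← abs_neg]; ring_nf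
    _ ≤ p * ((1 - p) * x ^ (p - 1 - 1) * d ^ 2 + x ^ (p - 1) * |e|) := by
        gcongr
        refine (abs_sub _ _).trans ?_
        rw [abs_of_nonneg (by have := sub_nonneg.2 hp1; positivity), abs_mul,
          abs_of_pos hx₂]
    _ ≤ p * ((1 - p) * x ^ (p - 1 - 1) * (A * x ^ (2 - p)) + x ^ (p - 1) * (B * x ^ (1 - p))) := by
        have := sub_nonneg.2 hp1
        gcongr
    _ = p * ((1 - p) * A + B) := by
        linear_combination p * (1 - p) * A * h₁ + p * B * h₂

/-- The chain-rule derivative of `g ^ q`; at a zero of `g` it vanishes as soon as `g'` does. -/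
noncomputable def rpowDeriv (q : ℝ) (g g' : ℝ → ℝ) (θ : ℝ) : ℝ := q * g θ ^ (q - 1) * g' θ

section RpowOfNonneg

variable {g g' g'' : ℝ → ℝ} {U : Set ℝ} {θ p q A B : ℝ}

theorem deriv_eq_zero_of_eq_zero (hU : IsOpen U) (hθ : θ ∈ U) (hg0 : ∀ s ∈ U, 0 ≤ g s)
    (hg : HasDerivAt g (g' θ) θ) (h0 : g θ = 0) : g' θ = 0 :=
  IsLocalMin.hasDerivAt_eq_zero
    (mem_of_superset (hU.mem_nhds hθ) fun s hs => h0 ▸ hg0 s hs) hg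

theorem rpowDeriv_eq_zero_of_eq_zero (hU : IsOpen U) (hθ : θ ∈ U) (hg0 : ∀ s ∈ U, 0 ≤ g s)
    (hg : HasDerivAt g (g' θ) θ) (h0 : g θ = 0) : rpowDeriv q g g' θ = 0 := by
  rw [rpowDeriv, deriv_eq_zero_of_eq_zero hU hθ hg0 hg h0, mul_zero]

theorem hasDerivAt_rpow_of_ne_zero (hg : HasDerivAt g (g' θ) θ) (h0 : g θ ≠ 0) :
    HasDerivAt (fun s => g s ^ q) (rpowDeriv q g g' θ) θ := by
  convert hg.rpow_const (p := q) (Or.inl h0) using 1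
  rw [rpowDeriv]; ring

theorem sq_rpowDeriv_le (hg0 : ∀ s ∈ U, 0 ≤ g s)
    (hA : ∀ s ∈ U, g' s ^ 2 ≤ A * g s ^ (2 - p)) (hθ : θ ∈ U) (h0 : g θ ≠ 0) :
    rpowDeriv q g g' θ ^ 2 ≤ q ^ 2 * A * g θ ^ (2 * q - p) :=
  sq_mul_rpow_sub_one_mul_le ((hg0 θ hθ).lt_of_ne' h0) (hA θ hθ)

theorem hasDerivAt_rpowDeriv (hg : HasDerivAt g (g' θ) θ) (hg' : HasDerivAt g' (g'' θ) θ)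
    (h0 : g θ ≠ 0) :
    HasDerivAt (rpowDeriv p g g')
      (p * (g' θ * (p - 1) * g θ ^ (p - 1 - 1)) * g' θ + p * g θ ^ (p - 1) * g'' θ) θ :=
  ((hg.rpow_const (Or.inl h0)).const_mul p).mul hg'

/-- Near a zero of `g`, `g ^ p` is `O((s - θ)²)`: `√(g ^ p) = g ^ (p / 2)` is Lipschitz there,
since its derivative squared is at most `(p / 2) ^ 2 * A`. -/
theorem isBigO_rpow_sq_of_eq_zero (hU : IsOpen U) (hg : ∀ s ∈ U, HasDerivAt g (g' s) s)
    (hg0 : ∀ s ∈ U, 0 ≤ g s) (hA : ∀ s ∈ U, g' s ^ 2 ≤ A * g s ^ (2 - p)) (hp : 0 < p)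
    (hθ : θ ∈ U) (h0 : g θ = 0) :
    (fun s => g s ^ p) =O[𝓝 θ] fun s => (s - θ) ^ 2 := by
  obtain ⟨δ, hδ, hball⟩ := Metric.isOpen_iff.1 hU θ hθ
  have hIcc : Icc (θ - δ / 2) (θ + δ / 2) ⊆ U := fun s hs =>
    hball (Metric.closedBall_subset_ball (half_lt_self hδ) (Real.closedBall_eq_Icc ▸ hs))
  have hq : 0 < p / 2 := half_pos hp
  set M := √((p / 2) ^ 2 * A)
  have hLip := abs_sub_le_of_hasDerivAt_of_ne_zero (f := fun s => g s ^ (p / 2))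
    (f' := rpowDeriv (p / 2) g g') (L := M) (sqrt_nonneg _)
    (ContinuousOn.rpow_const (fun s hs => (hg s (hIcc hs)).continuousAt.continuousWithinAt)
      fun _ _ => Or.inr hq.le)
    (fun s hs hs0 => hasDerivAt_rpow_of_ne_zero (hg s (hIcc hs))
      fun h => hs0 (by simp [h, hq.ne']))
    (fun s hs hs0 => abs_le_sqrt <| by
      have := sq_rpowDeriv_le (q := p / 2) hg0 hA (hIcc hs) fun h => hs0 (by simp [h, hq.ne'])
      rwa [show 2 * (p / 2) - p = 0 by ring, rpow_zero, mul_one] at this)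
  refine Asymptotics.IsBigO.of_bound (M ^ 2) ?_
  filter_upwards [Icc_mem_nhds (by linarith : θ - δ / 2 < θ) (by linarith : θ < θ + δ / 2)]
    with s hs
  have hθI : θ ∈ Icc (θ - δ / 2) (θ + δ / 2) := ⟨by linarith, by linarith⟩
  have h := hLip s hs θ hθI
  simp only [h0, zero_rpow hq.ne', sub_zero] at h
  have hgs := hg0 s (hIcc hs)
  rw [norm_of_nonneg (rpow_nonneg hgs p), norm_of_nonneg (sq_nonneg _),
    show p = p / 2 * (2 : ℕ) by push_cast; ring, rpow_mul_natCast hgs, ← sq_abs,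
    ← sq_abs (s - θ)]
  calc |g s ^ (p / 2)| ^ 2 ≤ (M * |s - θ|) ^ 2 := pow_le_pow_left₀ (abs_nonneg _) h 2
    _ = M ^ 2 * |s - θ| ^ 2 := mul_pow _ _ _

theorem hasDerivAt_rpow (hU : IsOpen U) (hg : ∀ s ∈ U, HasDerivAt g (g' s) s)
    (hg0 : ∀ s ∈ U, 0 ≤ g s) (hA : ∀ s ∈ U, g' s ^ 2 ≤ A * g s ^ (2 - p)) (hp : 0 < p)
    (hθ : θ ∈ U) : HasDerivAt (fun s => g s ^ p) (rpowDeriv p g g' θ) θ := by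
  by_cases h0 : g θ = 0
  · rw [rpowDeriv_eq_zero_of_eq_zero hU hθ hg0 (hg θ hθ) h0, hasDerivAt_iff_isLittleO]
    simp only [h0, zero_rpow hp.ne', smul_zero, sub_zero]
    exact (isBigO_rpow_sq_of_eq_zero hU hg hg0 hA hp hθ h0).trans_isLittleO
      (by simpa using Asymptotics.isLittleO_pow_sub_sub θ one_lt_two)
  · exact hasDerivAt_rpow_of_ne_zero (hg θ hθ) h0

/-- At a zero of `g` the bound `(rpowDeriv p g g') ^ 2 ≤ p ^ 2 * A * g ^ p` forces continuity. -/
theorem continuousOn_rpowDeriv (hU : IsOpen U) (hg : ∀ s ∈ U, HasDerivAt g (g' s) s)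
    (hg' : ∀ s ∈ U, HasDerivAt g' (g'' s) s) (hg0 : ∀ s ∈ U, 0 ≤ g s)
    (hA : ∀ s ∈ U, g' s ^ 2 ≤ A * g s ^ (2 - p)) (hp : 0 < p) :
    ContinuousOn (rpowDeriv p g g') U := by
  intro θ hθ
  refine ContinuousAt.continuousWithinAt ?_
  by_cases h0 : g θ = 0
  · have hsq : ∀ s ∈ U, |rpowDeriv p g g' s| ≤ √(p ^ 2 * A * g s ^ p) := fun s hs => by
      by_cases hs0 : g s = 0
      · simp [rpowDeriv_eq_zero_of_eq_zero hU hs hg0 (hg s hs) hs0]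
      · refine abs_le_sqrt ?_
        simpa [show 2 * p - p = p by ring] using sq_rpowDeriv_le (q := p) hg0 hA hs hs0
    have hlim : Tendsto (fun s => √(p ^ 2 * A * g s ^ p)) (𝓝 θ) (𝓝 0) := by
      have := ((hg θ hθ).continuousAt.rpow_const (Or.inr hp.le)).const_mul (p ^ 2 * A) |>.sqrt
      simpa [ContinuousAt, h0, zero_rpow hp.ne'] using this
    rw [ContinuousAt, rpowDeriv_eq_zero_of_eq_zero hU hθ hg0 (hg θ hθ) h0]
    exact squeeze_zero_norm' (eventually_of_mem (hU.mem_nhds hθ) hsq) hlim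
  · exact (hasDerivAt_rpowDeriv (hg θ hθ) (hg' θ hθ) h0).continuousAt

theorem abs_rpowDeriv_sub_le (hU : IsOpen U) (hg : ∀ s ∈ U, HasDerivAt g (g' s) s)
    (hg' : ∀ s ∈ U, HasDerivAt g' (g'' s) s) (hg0 : ∀ s ∈ U, 0 ≤ g s)
    (hA : ∀ s ∈ U, g' s ^ 2 ≤ A * g s ^ (2 - p)) (hB : ∀ s ∈ U, |g'' s| ≤ B * g s ^ (1 - p))
    (hA0 : 0 ≤ A) (hB0 : 0 ≤ B) (hp : 0 < p) (hp1 : p ≤ 1) {a b : ℝ} (hab : Icc a b ⊆ U) :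
    ∀ s ∈ Icc a b, ∀ t ∈ Icc a b,
      |rpowDeriv p g g' s - rpowDeriv p g g' t| ≤ p * ((1 - p) * A + B) * |s - t| := by
  have hne : ∀ s ∈ Icc a b, rpowDeriv p g g' s ≠ 0 → g s ≠ 0 := fun s hs hw h0 =>
    hw (rpowDeriv_eq_zero_of_eq_zero hU (hab hs) hg0 (hg s (hab hs)) h0)
  refine abs_sub_le_of_hasDerivAt_of_ne_zero (by have := sub_nonneg.2 hp1; positivity)
    ((continuousOn_rpowDeriv hU hg hg' hg0 hA hp).mono hab)
    (fun s hs hw => hasDerivAt_rpowDeriv (hg s (hab hs)) (hg' s (hab hs)) (hne s hs hw))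
    (fun s hs hw => ?_)
  exact abs_rpow_second_deriv_le hp hp1 ((hg0 s (hab hs)).lt_of_ne' (hne s hs hw))
    (hA s (hab hs)) (hB s (hab hs))

end RpowOfNonneg

section AlongLine

variable {E : Type*} [NormedAddCommGroup E] [NormedSpace ℝ E] {V : E → ℝ} {D : Set E}
  {x₀ y : E} {θ : ℝ}

theorem hasDerivAt_line : HasDerivAt (fun s : ℝ => x₀ + s • y) y θ := by
  simpa using ((hasDerivAt_id θ).smul_const y).const_add x₀

theorem hasDerivAt_comp_line (hD : IsOpen D) (hV : ContDiffOn ℝ 2 V D) (hθ : x₀ + θ • y ∈ D) :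
    HasDerivAt (fun s : ℝ => V (x₀ + s • y)) (fderiv ℝ V (x₀ + θ • y) y) θ := by
  exact ((hV.contDiffAt (hD.mem_nhds hθ)).differentiableAt (by norm_num)).hasFDerivAt
    |>.comp_hasDerivAt θ hasDerivAt_line

theorem hasDerivAt_fderiv_comp_line (hD : IsOpen D) (hV : ContDiffOn ℝ 2 V D)
    (hθ : x₀ + θ • y ∈ D) :
    HasDerivAt (fun s : ℝ => fderiv ℝ V (x₀ + s • y) y)
      (fderiv ℝ (fderiv ℝ V) (x₀ + θ • y) y y) θ := by
  have hV' : DifferentiableAt ℝ (fderiv ℝ V) (x₀ + θ • y) :=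
    ((hV.contDiffAt (hD.mem_nhds hθ)).fderiv_right (m := 1) (by norm_num)).differentiableAt
      (by norm_num)
  have hcomp : HasDerivAt (fun s : ℝ => fderiv ℝ V (x₀ + s • y))
      (fderiv ℝ (fderiv ℝ V) (x₀ + θ • y) y) θ :=
    hV'.hasFDerivAt.comp_hasDerivAt θ hasDerivAt_line
  simpa using hcomp.clm_apply (hasDerivAt_const θ y)

theorem abs_fderiv_fderiv_apply_le (hD : IsOpen D) {x : E} (hx : x ∈ D) (v : E) :
    |fderiv ℝ (fderiv ℝ V) x v v| ≤ ‖iteratedFDerivWithin ℝ 2 V D x‖ * ‖v‖ ^ 2 := by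
  rw [iteratedFDerivWithin_of_isOpen 2 hD hx, ← norm_eq_abs]
  have h := iteratedFDeriv_two_apply (𝕜 := ℝ) V x ![v, v]
  simp only [Matrix.cons_val_zero, Matrix.cons_val_one] at h
  rw [← h]
  simpa [Fin.prod_univ_two, sq] using (iteratedFDeriv ℝ 2 V x).le_opNorm ![v, v]

end AlongLine

theorem abs_fderiv_apply_le_norm_gradient {F : Type*} [NormedAddCommGroup F]
    [InnerProductSpace ℝ F] [CompleteSpace F] (V : F → ℝ) (x y : F) :
    |fderiv ℝ V x y| ≤ ‖gradient V x‖ * ‖y‖ := by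
  rw [gradient, ← InnerProductSpace.toDual_symm_apply]
  exact abs_real_inner_le_norm _ _

theorem stmt11_general {n : ℕ} (D : Set (EuclideanSpace ℝ (Fin n)))
    (hDopen : IsOpen D)
    (V : EuclideanSpace ℝ (Fin n) → ℝ) (hV : ContDiffOn ℝ 2 V D)
    (xstar : EuclideanSpace ℝ (Fin n))
    (m₁ γ₁ κ₂ μ : ℝ) (hm₁ : 1 ≤ m₁)
    (hγ₁ : 0 < γ₁) (hκ₂ : 0 < κ₂) (hμ : 0 < μ)
    (hVlow : ∀ x ∈ D, γ₁ * ‖x - xstar‖ ^ (2 * m₁) ≤ V x)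
    (hgradup : ∀ x ∈ D, ‖gradient V x‖ ^ 2 ≤ κ₂ * V x ^ (2 - 1 / m₁))
    (hHess : ∀ x ∈ D, ‖iteratedFDerivWithin ℝ 2 V D x‖ ≤ μ * V x ^ (1 - 1 / m₁))
    (x0 : EuclideanSpace ℝ (Fin n))
    (y : EuclideanSpace ℝ (Fin n))
    (hseg : ∀ θ ∈ Icc (0:ℝ) 1, x0 + θ • y ∈ D) :
    ∃ w : ℝ → ℝ,
      (∀ θ ∈ Icc (0:ℝ) 1,
        HasDerivAt (fun θ : ℝ => V (x0 + θ • y) ^ (1 / m₁)) (w θ) θ) ∧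
      ContinuousOn w (Icc 0 1) ∧
      (∀ θ₁ ∈ Icc (0:ℝ) 1, ∀ θ₂ ∈ Icc (0:ℝ) 1,
        |w θ₁ - w θ₂| ≤ ((m₁ - 1) * κ₂ + μ * m₁) / m₁ ^ 2 * ‖y‖ ^ 2 * |θ₁ - θ₂|) := by
  set U : Set ℝ := {θ | x0 + θ • y ∈ D}
  have hU : IsOpen U := hDopen.preimage (by fun_prop)
  have hp : 0 < 1 / m₁ := by positivity
  have hp1 : 1 / m₁ ≤ 1 := div_le_one_of_le₀ hm₁ (by linarith)
  have hg := fun θ (hθ : θ ∈ U) => hasDerivAt_comp_line hDopen hV hθ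
  have hg' := fun θ (hθ : θ ∈ U) => hasDerivAt_fderiv_comp_line hDopen hV hθ
  have hg0 : ∀ θ ∈ U, 0 ≤ V (x0 + θ • y) := fun θ hθ =>
    (by positivity : 0 ≤ γ₁ * ‖x0 + θ • y - xstar‖ ^ (2 * m₁)).trans (hVlow _ hθ)
  have hA : ∀ θ ∈ U, fderiv ℝ V (x0 + θ • y) y ^ 2 ≤
      κ₂ * ‖y‖ ^ 2 * V (x0 + θ • y) ^ (2 - 1 / m₁) := fun θ hθ => by
    calc fderiv ℝ V (x0 + θ • y) y ^ 2 ≤ (‖gradient V (x0 + θ • y)‖ * ‖y‖) ^ 2 := by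
          rw [← sq_abs]
          exact pow_le_pow_left₀ (abs_nonneg _) (abs_fderiv_apply_le_norm_gradient V _ y) 2
      _ ≤ κ₂ * V (x0 + θ • y) ^ (2 - 1 / m₁) * ‖y‖ ^ 2 := by
          rw [mul_pow]; gcongr; exact hgradup _ hθ
      _ = _ := by ring
  have hB : ∀ θ ∈ U, |fderiv ℝ (fderiv ℝ V) (x0 + θ • y) y y| ≤
      μ * ‖y‖ ^ 2 * V (x0 + θ • y) ^ (1 - 1 / m₁) := fun θ hθ => by
    calc _ ≤ ‖iteratedFDerivWithin ℝ 2 V D (x0 + θ • y)‖ * ‖y‖ ^ 2 :=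
          abs_fderiv_fderiv_apply_le hDopen hθ y
      _ ≤ μ * V (x0 + θ • y) ^ (1 - 1 / m₁) * ‖y‖ ^ 2 := by gcongr; exact hHess _ hθ
      _ = _ := by ring
  refine ⟨rpowDeriv (1 / m₁) (fun θ => V (x0 + θ • y)) (fun θ => fderiv ℝ V (x0 + θ • y) y),
    fun θ hθ => hasDerivAt_rpow hU hg hg0 hA hp (hseg θ hθ),
    (continuousOn_rpowDeriv hU hg hg' hg0 hA hp).mono hseg, fun θ₁ h₁ θ₂ h₂ => ?_⟩
  convert abs_rpowDeriv_sub_le hU hg hg' hg0 hA hB (by positivity) (by positivity) hp hp1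
    hseg θ₁ h₁ θ₂ h₂ using 2
  field_simp

/-- Under the growth assumptions on `V`, `∇V`, and the Hessian of `V`
on a bounded convex domain `D`, for any `x0 ∈ D` and `y` with the segment
`x0 + θ y`, `θ ∈ [0,1]`, contained in `D`, the function `v θ = V(x0 + θ y)^{1/m₁}`
is `C¹` on `[0,1]` and its derivative is Lipschitz with constant
`L̄ = ((m₁-1)κ₂ + μ m₁)/m₁² · ‖y‖²`. -/
theorem stmt11 {n : ℕ} (D : Set (EuclideanSpace ℝ (Fin n)))
    (hDopen : IsOpen D) (hDconv : Convex ℝ D) (hDbdd : Bornology.IsBounded D)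
    (V : EuclideanSpace ℝ (Fin n) → ℝ) (hV : ContDiffOn ℝ 2 V D)
    (xstar : EuclideanSpace ℝ (Fin n)) (hxstar : xstar ∈ D)
    (m₁ γ₁ γ₂ κ₁ κ₂ μ : ℝ) (hm₁ : 1 ≤ m₁)
    (hγ₁ : 0 < γ₁) (hγ₂ : 0 < γ₂) (hκ₁ : 0 < κ₁) (hκ₂ : 0 < κ₂) (hμ : 0 < μ)
    (hVlow : ∀ x ∈ D, γ₁ * ‖x - xstar‖ ^ (2 * m₁) ≤ V x)
    (hVup : ∀ x ∈ D, V x ≤ γ₂ * ‖x - xstar‖ ^ (2 * m₁))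
    (hgradlow : ∀ x ∈ D, κ₁ * V x ^ (2 - 1 / m₁) ≤ ‖gradient V x‖ ^ 2)
    (hgradup : ∀ x ∈ D, ‖gradient V x‖ ^ 2 ≤ κ₂ * V x ^ (2 - 1 / m₁))
    (hHess : ∀ x ∈ D, ‖iteratedFDerivWithin ℝ 2 V D x‖ ≤ μ * V x ^ (1 - 1 / m₁))
    (x0 : EuclideanSpace ℝ (Fin n)) (hx0 : x0 ∈ D)
    (y : EuclideanSpace ℝ (Fin n))
    (hseg : ∀ θ ∈ Icc (0:ℝ) 1, x0 + θ • y ∈ D) :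
    ∃ w : ℝ → ℝ,
      (∀ θ ∈ Icc (0:ℝ) 1,
        HasDerivAt (fun θ : ℝ => V (x0 + θ • y) ^ (1 / m₁)) (w θ) θ) ∧
      ContinuousOn w (Icc 0 1) ∧
      (∀ θ₁ ∈ Icc (0:ℝ) 1, ∀ θ₂ ∈ Icc (0:ℝ) 1,
        |w θ₁ - w θ₂| ≤ ((m₁ - 1) * κ₂ + μ * m₁) / m₁ ^ 2 * ‖y‖ ^ 2 * |θ₁ - θ₂|) :=
  stmt11_general D hDopen V hV xstar m₁ γ₁ κ₂ μ hm₁ hγ₁ hκ₂ hμ hVlow hgradup hHess x0 y hseg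
end

section
/- Let J₀ > 0, λ > 0, ε > 0, m̃ > 0, and suppose a sequence (Jₙ) of nonnegative reals satisfies J_{n+1} ≤ Jₙ·(1 + m̃·ε·λ·Jₙ^{m̃})^{-1/m̃} with J₀ given. Then for all n ∈ ℕ, Jₙ ≤ J₀·(1 + n·ε·λ·m̃·J₀^{m̃})^{-1/m̃}. -/
/-! In the power coordinate `t = x ^ m` the step map `x ↦ x (1 + c x^m)^{-1/m}` becomes
`t ↦ t / (1 + c t)`, i.e. `1/t ↦ 1/t + c`. It is monotone, so the recursive inequality can be
compared with the exact orbit of `J₀`, along which `1 / Jₙ^m` grows by exactly `c = m ε λ`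
per step. -/

open Real

namespace DecayIteration

variable {c m : ℝ}

lemma mul_rpow_neg_one_div_eq {x D : ℝ} (hx : 0 ≤ x) (hD : 0 < D) (hm : m ≠ 0) :
    x * D ^ (-(1 / m)) = (x ^ m / D) ^ (1 / m) := by
  rw [div_rpow (rpow_nonneg hx m) hD.le, one_div, rpow_rpow_inv hx hm, rpow_neg hD.le,
    div_eq_mul_inv]

lemma step_eq_rpow_div (hc : 0 ≤ c) (hm : m ≠ 0) {x : ℝ} (hx : 0 ≤ x) :
    x * (1 + c * x ^ m) ^ (-(1 / m)) = (x ^ m / (1 + c * x ^ m)) ^ (1 / m) :=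
  mul_rpow_neg_one_div_eq hx (by positivity) hm

lemma monotoneOn_step (hc : 0 ≤ c) (hm : 0 < m) :
    MonotoneOn (fun x : ℝ => x * (1 + c * x ^ m) ^ (-(1 / m))) (Set.Ici 0) := by
  intro x (hx : 0 ≤ x) y (hy : 0 ≤ y) hxy
  simp only [step_eq_rpow_div hc hm.ne' hx, step_eq_rpow_div hc hm.ne' hy]
  have hxm : 0 ≤ x ^ m := rpow_nonneg hx m
  have hxym : x ^ m ≤ y ^ m := rpow_le_rpow hx hxy hm.le
  refine rpow_le_rpow (by positivity) ?_ (by positivity)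
  rw [div_le_div_iff₀ (by positivity) (by positivity)]
  nlinarith [mul_nonneg hc hxm]

lemma step_mul_rpow_neg_one_div (hc : 0 ≤ c) (hm : m ≠ 0) {a D : ℝ} (ha : 0 ≤ a)
    (hD : 0 < D) :
    (a * D ^ (-(1 / m))) * (1 + c * (a * D ^ (-(1 / m))) ^ m) ^ (-(1 / m))
      = a * (D + c * a ^ m) ^ (-(1 / m)) := by
  have ham : 0 ≤ a ^ m := rpow_nonneg ha m
  have hpow : (a * D ^ (-(1 / m))) ^ m = a ^ m / D := by
    rw [mul_rpow_neg_one_div_eq ha hD hm, one_div, rpow_inv_rpow (by positivity) hm]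
  rw [step_eq_rpow_div hc hm (by positivity), hpow,
    mul_rpow_neg_one_div_eq ha (by positivity) hm]
  congr 1
  field_simp

end DecayIteration

open DecayIteration in
theorem stmt15_general (J : ℕ → ℝ) (ε lam mt : ℝ)
    (hε : 0 < ε) (hlam : 0 < lam) (hmt : 0 < mt)
    (hJpos : ∀ n, 0 ≤ J n)
    (hrec : ∀ n, J (n + 1) ≤ J n * (1 + mt * ε * lam * J n ^ mt) ^ (-(1 / mt))) :
    ∀ n : ℕ, J n ≤ J 0 * (1 + n * ε * lam * mt * J 0 ^ mt) ^ (-(1 / mt)) := by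
  have hc : 0 ≤ mt * ε * lam := by positivity
  intro n
  induction n with
  | zero => simp
  | succ n ih =>
    have hD : 0 < 1 + n * ε * lam * mt * J 0 ^ mt := by
      have := rpow_nonneg (hJpos 0) mt
      positivity
    calc J (n + 1) ≤ J n * (1 + mt * ε * lam * J n ^ mt) ^ (-(1 / mt)) := hrec n
      _ ≤ _ := monotoneOn_step hc hmt (hJpos n) (le_trans (hJpos n) ih) ih
      _ = J 0 * (1 + n * ε * lam * mt * J 0 ^ mt + mt * ε * lam * J 0 ^ mt) ^ (-(1 / mt)) :=
        step_mul_rpow_neg_one_div hc hmt.ne' (hJpos 0) hD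
      _ = J 0 * (1 + ↑(n + 1) * ε * lam * mt * J 0 ^ mt) ^ (-(1 / mt)) := by
        push_cast
        ring_nf

/-- if a nonnegative sequence satisfies
`J_{n+1} ≤ Jₙ (1 + m̃ ε λ Jₙ^{m̃})^{-1/m̃}` with `J₀ > 0`, then
`Jₙ ≤ J₀ (1 + n ε λ m̃ J₀^{m̃})^{-1/m̃}` for all `n`. -/
theorem stmt15 (J : ℕ → ℝ) (ε lam mt : ℝ)
    (hε : 0 < ε) (hlam : 0 < lam) (hmt : 0 < mt)
    (hJ0 : 0 < J 0) (hJpos : ∀ n, 0 ≤ J n)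
    (hrec : ∀ n, J (n + 1) ≤ J n * (1 + mt * ε * lam * J n ^ mt) ^ (-(1 / mt))) :
    ∀ n : ℕ, J n ≤ J 0 * (1 + n * ε * lam * mt * J 0 ^ mt) ^ (-(1 / mt)) :=
  stmt15_general J ε lam mt hε hlam hmt hJpos hrec
end
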